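/- Existence of the multiplicative norm: Let f : S → T be an N-map of truncation posets and k a commutative ring. Define f^w_⊗ : k^S → k^T by (f^w_⊗⟨x_s⟩)_t = Π_{s ∈ f^{-hat}(t)} x_s^{|t|/|s|}, where f^{-hat}(t) is the finite set of minimal elements s with t | f(s). Then for every (a_s) ∈ W_S(k), the vector f^w_⊗(w(a_s)) lies in the image of the ghost map w : W_T(k) → k^T. Consequently there is a unique natural (in k) map f_⊗ : W_S(k) → W_T(k) covering f^w_⊗ on ghost coordinates. -/

import Mathlib

/-!
Work universally over `R = ℤ[X_s | s ∈ S]`, on which `φ_p = expand p` lifts the Frobenius.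
By Dwork's lemma a family `c : T → R` is a ghost vector as soon as
`c t ≡ φ_p (c t') mod p ^ v_p |t|` whenever `t' ≤ t` and `|t| = p |t'|`, and every ghost vector
satisfies these congruences. For such `t' ≤ t`, sending `s ∈ f^(t)` to the element of `f^(t')`
below it is a bijection, and corresponding `s' ≤ s` either coincide with `p ∤ |s|`, or satisfy
`|s| = p |s'|`. Either way the factors of the norm of the ghost vector of `(X_s)` satisfy the
congruences, so this norm is the ghost vector of some `b`, and `a ↦ (aeval a (b t))_t` is the
required natural lift. Uniqueness: ghost vectors over the torsion-free ring `R` determine their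
Witt coordinates, and naturality reduces any lift to its value at the universal point `(X_s)`.
-/

namespace TP

def IsTPNorm {S : Type*} [PartialOrder S] (ν : S → ℕ) : Prop :=
  (∀ s, 0 < ν s) ∧
  (∀ s t : S, s ≤ t → ν s ∣ ν t) ∧
  (∀ s t u : S, s ≤ t → t ≤ u → ν u / ν s = (ν u / ν t) * (ν t / ν s)) ∧
  (∀ (s : S) (d : ℕ), d ∣ ν s → ∃! t : S, t ≤ s ∧ ν t = ν s / d) ∧
  (∀ s t t' : S, s ≤ t → s ≤ t' → ν t = ν t' → t = t')

def IsTPMap {S T : Type*} [PartialOrder S] [PartialOrder T] (νS : S → ℕ) (νT : T → ℕ)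
    (f : S → T) : Prop :=
  ∀ s₁ s₂ : S, s₁ ≤ s₂ → f s₁ ≤ f s₂ ∧ νT (f s₂) / νT (f s₁) = νS s₂ / νS s₁

def IsFibration {S T : Type*} [PartialOrder S] [PartialOrder T] (f : S → T) : Prop :=
  ∀ (s : S) (t' : T), f s ≤ t' → ∃ s', s ≤ s' ∧ f s' = t'

def IsTMap {S T : Type*} [PartialOrder S] [PartialOrder T] (νS : S → ℕ) (νT : T → ℕ)
    (f : S → T) : Prop :=
  IsTPMap νS νT f ∧ IsFibration f ∧ ∀ t : T, (f ⁻¹' {t}).Finite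

def SameComp {S : Type*} [PartialOrder S] (ν : S → ℕ) (a b : S) : Prop :=
  ∃ i : S, ν i = 1 ∧ i ≤ a ∧ i ≤ b

def hatPreim {S T : Type*} [PartialOrder S] [PartialOrder T] (f : S → T) (t : T) : Set S :=
  {s | t ≤ f s ∧ ∀ s', s' ≤ s → t ≤ f s' → s' = s}

def IsNMap {S T : Type*} [PartialOrder S] [PartialOrder T] (νS : S → ℕ) (νT : T → ℕ)
    (f : S → T) : Prop :=
  IsTPMap νS νT f ∧
  (∀ (s : S) (t' : T), SameComp νT (f s) t' → ∃ s', SameComp νS s s' ∧ t' ≤ f s') ∧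
  ∀ t : T, (hatPreim f t).Finite

noncomputable def ghost {S : Type*} [PartialOrder S] (ν : S → ℕ) {k : Type*} [CommRing k]
    (a : S → k) : S → k :=
  fun s => ∑ᶠ t ∈ {t : S | t ≤ s}, (ν t : k) * a t ^ (ν s / ν t)

end TP


noncomputable def nmGhost {S T : Type*} [PartialOrder S] [PartialOrder T]
    (νS : S → ℕ) (νT : T → ℕ) (f : S → T) {k : Type*} [CommRing k] (x : S → k) : T → k :=
  fun t => ∏ᶠ s ∈ TP.hatPreim f t, x s ^ (νT t / νS s)

theorem Nat.ordProj_mul_prime_dvd_of_not_dvd {p n d : ℕ} (hp : p.Prime) (hn : n ≠ 0)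
    (hd : d ∣ n * p) (hnd : ¬ d ∣ n) : p ^ (n * p).factorization p ∣ d := by
  have hnp : n * p ≠ 0 := mul_ne_zero hn hp.ne_zero
  have hd0 : d ≠ 0 := ne_zero_of_dvd_ne_zero hnp hd
  rw [hp.pow_dvd_iff_le_factorization hd0]
  by_contra hlt
  refine hnd ((Nat.factorization_le_iff_dvd hd0 hn).1 fun q => ?_)
  have hq := (Nat.factorization_le_iff_dvd hd0 hnp).2 hd q
  rw [Nat.factorization_mul hn hp.ne_zero, hp.factorization] at hlt hq
  simp only [Finsupp.add_apply, Finsupp.single_apply] at hlt hq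
  split_ifs at hq with h
  · subst h; simp only [if_true] at hlt; omega
  · omega

theorem pow_sub_pow_dvd_of_dvd_sub {R : Type*} [CommRing R] {p c : ℕ} {x y : R} (hc : 1 ≤ c)
    (h : (p : R) ^ c ∣ x - y) (e : ℕ) : (p : R) ^ (c + e.factorization p) ∣ x ^ e - y ^ e := by
  have hpow : ∀ k, (p : R) ^ (c + k) ∣ x ^ p ^ k - y ^ p ^ k := by
    intro k
    induction k with
    | zero => simpa using h
    | succ k ih =>
      have hp : (p : R) ∣ x ^ p ^ k - y ^ p ^ k := (dvd_pow_self _ (by omega)).trans ih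
      rw [pow_succ p k, pow_mul, pow_mul, ← add_assoc, pow_succ', ← geom_sum₂_mul]
      exact mul_dvd_mul (dvd_geom_sum₂_self hp) ih
  obtain ⟨m, hm⟩ := Nat.ordProj_dvd e p
  have := (hpow (e.factorization p)).trans (sub_dvd_pow_sub_pow (x ^ p ^ _) (y ^ p ^ _) m)
  rwa [← pow_mul, ← pow_mul, ← hm] at this

theorem natCast_dvd_of_forall_prime_pow_dvd {R : Type*} [CommRing R] {n : ℕ} (hn : n ≠ 0) {r : R}
    (h : ∀ p, p.Prime → p ∣ n → (p : R) ^ n.factorization p ∣ r) : (n : R) ∣ r := by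
  rw [Nat.prod_primeFactors_pow_factorization hn, Nat.cast_prod]
  refine Finset.prod_dvd_of_coprime (fun p hp q hq hpq => ?_) fun p hp => ?_
  · have hcop := ((Nat.coprime_primes (Nat.prime_of_mem_primeFactors hp)
      (Nat.prime_of_mem_primeFactors hq)).2 hpq).pow (n.factorization p) (n.factorization q)
    simpa using hcop.isCoprime.map (Int.castRingHom R)
  · simpa using h p (Nat.prime_of_mem_primeFactors hp) (Nat.dvd_of_mem_primeFactors hp)

theorem dvd_finprod_mem_sub_finprod_mem {ι R : Type*} [CommRing R] {s : Set ι} (hs : s.Finite)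
    {a b : ι → R} {d : R} (h : ∀ i ∈ s, d ∣ a i - b i) :
    d ∣ (∏ᶠ i ∈ s, a i) - ∏ᶠ i ∈ s, b i := by
  rw [finprod_mem_eq_finite_toFinset_prod _ hs, finprod_mem_eq_finite_toFinset_prod _ hs]
  simp only [← Ideal.mem_span_singleton, ← Ideal.Quotient.eq, map_prod] at h ⊢
  exact Finset.prod_congr rfl fun i hi => h i (hs.mem_toFinset.1 hi)

namespace TP

namespace IsTPNorm

variable {S : Type*} [PartialOrder S] {ν : S → ℕ} (hν : IsTPNorm ν)
include hν

theorem pos (s : S) : 0 < ν s := hν.1 s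

theorem dvd_of_le {s t : S} (h : s ≤ t) : ν s ∣ ν t := hν.2.1 s t h

theorem exists_le_norm_eq {s : S} {d : ℕ} (hd : d ∣ ν s) : ∃ t ≤ s, ν t = d := by
  obtain ⟨t, ⟨hts, ht⟩, -⟩ := hν.2.2.2.1 s (ν s / d) (Nat.div_dvd_of_dvd hd)
  exact ⟨t, hts, by rw [ht, Nat.div_div_self hd (hν.pos s).ne']⟩

theorem eq_of_le_of_norm_eq {s t₁ t₂ : S} (h₁ : t₁ ≤ s) (h₂ : t₂ ≤ s) (he : ν t₁ = ν t₂) :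
    t₁ = t₂ := by
  obtain ⟨t, -, ht⟩ := hν.2.2.2.1 s (ν s / ν t₁) (Nat.div_dvd_of_dvd (hν.dvd_of_le h₁))
  have hd : ν s / (ν s / ν t₁) = ν t₁ := Nat.div_div_self (hν.dvd_of_le h₁) (hν.pos s).ne'
  rw [ht t₁ ⟨h₁, hd.symm⟩, ht t₂ ⟨h₂, by rw [hd, he]⟩]

theorem le_of_le_of_dvd {s t₁ t₂ : S} (h₁ : t₁ ≤ s) (h₂ : t₂ ≤ s) (hd : ν t₁ ∣ ν t₂) :
    t₁ ≤ t₂ := by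
  obtain ⟨u, hut₂, hu⟩ := hν.exists_le_norm_eq hd
  rwa [hν.eq_of_le_of_norm_eq h₁ (hut₂.trans h₂) hu.symm]

theorem norm_lt_norm {s t : S} (h : s < t) : ν s < ν t :=
  (Nat.le_of_dvd (hν.pos t) (hν.dvd_of_le h.le)).lt_of_ne
    fun he => h.ne (hν.eq_of_le_of_norm_eq h.le le_rfl he)

theorem wellFounded_lt : WellFounded ((· < ·) : S → S → Prop) :=
  (InvImage.wf ν _root_.wellFounded_lt).mono fun _ _ => hν.norm_lt_norm

theorem finite_Iic (s : S) : (Set.Iic s).Finite :=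
  (ν s).divisors.finite_toSet.of_injOn
    (fun _ ht => Nat.mem_divisors.2 ⟨hν.dvd_of_le ht, (hν.pos s).ne'⟩)
    fun _ h₁ _ h₂ => hν.eq_of_le_of_norm_eq h₁ h₂

theorem exists_le_norm_eq_one (s : S) : ∃ i ≤ s, ν i = 1 :=
  hν.exists_le_norm_eq (one_dvd _)

theorem le_of_norm_eq_one {s i u : S} (hi : i ≤ s) (hu : u ≤ s) (hi1 : ν i = 1) : i ≤ u :=
  hν.le_of_le_of_dvd hi hu (hi1 ▸ one_dvd _)

theorem sameComp_of_le {s₁ s₂ u : S} (h₁ : u ≤ s₁) (h₂ : u ≤ s₂) : SameComp ν s₁ s₂ := by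
  obtain ⟨i, hiu, hi1⟩ := hν.exists_le_norm_eq_one u
  exact ⟨i, hi1, hiu.trans h₁, hiu.trans h₂⟩

end IsTPNorm

theorem IsTPMap.norm_map_eq {S T : Type*} [PartialOrder S] [PartialOrder T] {νS : S → ℕ}
    {νT : T → ℕ} {f : S → T} (hf : IsTPMap νS νT f) (hT : IsTPNorm νT) {i s : S} (hi : i ≤ s)
    (hi1 : νS i = 1) : νT (f s) = νS s * νT (f i) := by
  obtain ⟨hle, hnorm⟩ := hf i s hi
  rw [hi1, Nat.div_one] at hnorm
  rw [← hnorm, Nat.div_mul_cancel (hT.dvd_of_le hle)]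

section HatPreim

variable {S T : Type*} [PartialOrder S] [PartialOrder T] {νS : S → ℕ} {νT : T → ℕ} {f : S → T}

theorem exists_le_mem_hatPreim (hS : IsTPNorm νS) {t : T} {s : S} (h : t ≤ f s) :
    ∃ s' ≤ s, s' ∈ hatPreim f t := by
  have : WellFoundedLT S := ⟨hS.wellFounded_lt⟩
  obtain ⟨s', hs's, hmin⟩ := exists_minimal_le_of_wellFoundedLT (fun s => t ≤ f s) s h
  exact ⟨s', hs's, hmin.prop, fun u hus hu => hmin.eq_of_le hu hus⟩

theorem IsTPMap.dvd_mul_norm_map (hf : IsTPMap νS νT f) (hT : IsTPNorm νT) {t : T} {s i : S}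
    (hts : t ≤ f s) (hi : i ≤ s) (hi1 : νS i = 1) : νT t ∣ νS s * νT (f i) :=
  hf.norm_map_eq hT hi hi1 ▸ hT.dvd_of_le hts

section NormOfHatPreim

variable (hS : IsTPNorm νS) (hT : IsTPNorm νT) (hf : IsTPMap νS νT f)
include hS hT hf

theorem norm_eq_of_mem_hatPreim {t : T} {s i : S} (hs : s ∈ hatPreim f t) (hi : i ≤ s)
    (hi1 : νS i = 1) {d : ℕ} (hd : d ∣ νS s) (ht : νT t ∣ d * νT (f i)) : d = νS s := by
  obtain ⟨u, hus, rfl⟩ := hS.exists_le_norm_eq hd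
  have hfu : νT (f u) = νS u * νT (f i) := hf.norm_map_eq hT (hS.le_of_norm_eq_one hi hus hi1) hi1
  have htu : t ≤ f u := hT.le_of_le_of_dvd hs.1 (hf u s hus).1 (hfu ▸ ht)
  rw [hs.2 u hus htu]

theorem norm_dvd_of_mem_hatPreim {t : T} {s : S} (hs : s ∈ hatPreim f t) : νS s ∣ νT t := by
  obtain ⟨i, his, hi1⟩ := hS.exists_le_norm_eq_one s
  have hgcd := norm_eq_of_mem_hatPreim hS hT hf hs his hi1 (Nat.gcd_dvd_left _ (νT t)) <| by
    rw [← Nat.gcd_mul_right]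
    exact Nat.dvd_gcd (hf.dvd_mul_norm_map hT hs.1 his hi1) (dvd_mul_right _ _)
  exact hgcd ▸ Nat.gcd_dvd_right _ _

theorem eq_of_mem_hatPreim_of_sameComp {t : T} {s₁ s₂ : S} (h₁ : s₁ ∈ hatPreim f t)
    (h₂ : s₂ ∈ hatPreim f t) (hc : SameComp νS s₁ s₂) : s₁ = s₂ := by
  obtain ⟨i, hi1, hi₁, hi₂⟩ := hc
  have hgcd : ∀ {s s'}, s ∈ hatPreim f t → s' ∈ hatPreim f t → i ≤ s → i ≤ s' →
      Nat.gcd (νS s) (νS s') = νS s := fun hs hs' his his' =>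
    norm_eq_of_mem_hatPreim hS hT hf hs his hi1 (Nat.gcd_dvd_left _ _) <| by
      rw [← Nat.gcd_mul_right]
      exact Nat.dvd_gcd (hf.dvd_mul_norm_map hT hs.1 his hi1)
        (hf.dvd_mul_norm_map hT hs'.1 his' hi1)
  exact hS.2.2.2.2 i s₁ s₂ hi₁ hi₂
    ((hgcd h₁ h₂ hi₁ hi₂).symm.trans ((Nat.gcd_comm _ _).trans (hgcd h₂ h₁ hi₂ hi₁)))

theorem eq_or_norm_mul_of_mem_hatPreim {p : ℕ} (hp : p.Prime) {t' t : T} (hmul : νT t' * p = νT t) {s' s : S}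
    (hs' : s' ∈ hatPreim f t') (hs : s ∈ hatPreim f t) (hle : s' ≤ s) :
    (s' = s ∧ ¬ p ∣ νS s) ∨ νS s' * p = νS s := by
  obtain ⟨i, his', hi1⟩ := hS.exists_le_norm_eq_one s'
  have his := his'.trans hle
  have hdvd : νS s ∣ νS s' * p := by
    have hgcd := norm_eq_of_mem_hatPreim hS hT hf hs his hi1 (Nat.gcd_dvd_left _ (νS s' * p)) <| by
      have ht : νT t ∣ νS s' * p * νT (f i) := by
        rw [← hmul, mul_right_comm]
        exact Nat.mul_dvd_mul_right (hf.dvd_mul_norm_map hT hs'.1 his' hi1) p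
      rw [← Nat.gcd_mul_right]
      exact Nat.dvd_gcd (hf.dvd_mul_norm_map hT hs.1 his hi1) ht
    exact hgcd ▸ Nat.gcd_dvd_right _ _
  obtain ⟨r, hr⟩ := hS.dvd_of_le hle
  rcases hp.eq_one_or_self_of_dvd r ((Nat.mul_dvd_mul_iff_left (hS.pos s')).1 (hr ▸ hdvd))
    with rfl | rfl
  · obtain rfl : s' = s := hS.eq_of_le_of_norm_eq hle le_rfl (by rw [hr, mul_one])
    refine Or.inl ⟨rfl, fun hps => ?_⟩
    have hquot := norm_eq_of_mem_hatPreim hS hT hf hs' his' hi1 (Nat.div_dvd_of_dvd hps) <| by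
      refine Nat.dvd_of_mul_dvd_mul_right hp.pos ?_
      rw [hmul, mul_right_comm, Nat.div_mul_cancel hps]
      exact hf.dvd_mul_norm_map hT hs.1 his hi1
    exact (Nat.div_lt_self (hS.pos s') hp.one_lt).ne hquot
  · exact Or.inr hr.symm

end NormOfHatPreim

theorem exists_bijOn_hatPreim (hS : IsTPNorm νS) (hT : IsTPNorm νT) (hf : IsNMap νS νT f)
    {t' t : T} (ht : t' ≤ t) :
    ∃ ρ : S → S, Set.BijOn ρ (hatPreim f t) (hatPreim f t') ∧ ∀ s ∈ hatPreim f t, ρ s ≤ s := by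
  have hdown : ∀ s ∈ hatPreim f t, ∃ s' ≤ s, s' ∈ hatPreim f t' :=
    fun s hs => exists_le_mem_hatPreim hS (ht.trans hs.1)
  choose! ρ hρle hρmem using hdown
  refine ⟨ρ, ⟨hρmem, fun s₁ h₁ s₂ h₂ he => ?_, fun s' hs' => ?_⟩, hρle⟩
  · exact eq_of_mem_hatPreim_of_sameComp hS hT hf.1 h₁ h₂
      (hS.sameComp_of_le (hρle s₁ h₁) (he ▸ hρle s₂ h₂))
  · obtain ⟨j, hjt', hj1⟩ := hT.exists_le_norm_eq_one t'
    obtain ⟨s'', ⟨i, hi1, his', his''⟩, hts''⟩ :=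
      hf.2.1 s' t ⟨j, hj1, hjt'.trans hs'.1, hjt'.trans ht⟩
    obtain ⟨s, hss'', hs⟩ := exists_le_mem_hatPreim hS hts''
    refine ⟨s, hs, eq_of_mem_hatPreim_of_sameComp hS hT hf.1 (hρmem s hs) hs' ⟨i, hi1, ?_, his'⟩⟩
    exact hS.le_of_norm_eq_one his'' ((hρle s hs).trans hss'') hi1

end HatPreim


def IsFrobeniusLift {R : Type*} [CommRing R] (φ : ℕ → R →+* R) : Prop :=
  ∀ p : ℕ, p.Prime → ∀ x, (p : R) ∣ φ p x - x ^ p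

def DworkCongr {T : Type*} [PartialOrder T] (ν : T → ℕ) {R : Type*} [CommRing R]
    (φ : ℕ → R →+* R) (c : T → R) : Prop :=
  ∀ p : ℕ, p.Prime → ∀ t' t, t' ≤ t → ν t' * p = ν t →
    (p : R) ^ (ν t).factorization p ∣ c t - φ p (c t')

section Ghost

variable {T : Type*} [PartialOrder T] {ν : T → ℕ} {R : Type*} [CommRing R]

theorem ghost_eq_sum (hν : IsTPNorm ν) (a : T → R) (t : T) :
    ghost ν a t = ∑ u ∈ (hν.finite_Iic t).toFinset, (ν u : R) * a u ^ (ν t / ν u) :=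
  finsum_mem_eq_finite_toFinset_sum _ (hν.finite_Iic t)

theorem ghost_congr {a b : T → R} {t : T} (h : ∀ u ≤ t, a u = b u) :
    ghost ν a t = ghost ν b t :=
  finsum_mem_congr rfl fun u hu => by rw [h u hu]

theorem map_ghost (hν : IsTPNorm ν) {R' F : Type*} [CommRing R'] [FunLike F R R']
    [RingHomClass F R R'] (g : F) (a : T → R) (t : T) :
    g (ghost ν a t) = ghost ν (fun u => g (a u)) t := by
  simp only [ghost_eq_sum hν, map_sum, map_mul, map_pow, map_natCast]

theorem ghost_sub_ghost_of_eq_of_lt (hν : IsTPNorm ν) {a b : T → R} {t : T}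
    (h : ∀ u < t, a u = b u) : ghost ν a t - ghost ν b t = ν t * (a t - b t) := by
  rw [ghost_eq_sum hν, ghost_eq_sum hν, ← Finset.sum_sub_distrib, Finset.sum_eq_single t]
  · rw [Nat.div_self (hν.pos t), pow_one, pow_one, mul_sub]
  · intro u hu hne
    rw [h u (((hν.finite_Iic t).mem_toFinset.1 hu).lt_of_ne hne), sub_self]
  · exact fun ht => (ht ((hν.finite_Iic t).mem_toFinset.2 le_rfl)).elim

theorem ghost_injective (hν : IsTPNorm ν) [IsAddTorsionFree R] :
    Function.Injective (ghost ν : (T → R) → T → R) := by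
  intro a b h
  funext t
  induction t using hν.wellFounded_lt.induction with
  | _ t ih =>
    have hsub := ghost_sub_ghost_of_eq_of_lt hν ih
    rw [congrFun h t, sub_self, ← nsmul_eq_mul, eq_comm,
      nsmul_eq_zero_iff_right (hν.pos t).ne', sub_eq_zero] at hsub
    exact hsub

theorem ghost_dworkCongr (hν : IsTPNorm ν) {φ : ℕ → R →+* R} (hφ : IsFrobeniusLift φ)
    (b : T → R) : DworkCongr ν φ (ghost ν b) := by
  classical
  intro p hp t' t ht hmul
  have hsub : (hν.finite_Iic t').toFinset ⊆ (hν.finite_Iic t).toFinset := fun u hu => by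
    simpa using ((hν.finite_Iic t').mem_toFinset.1 hu).trans ht
  rw [map_ghost hν, ghost_eq_sum hν, ghost_eq_sum hν, ← Finset.sum_sdiff hsub, add_sub_assoc,
    ← Finset.sum_sub_distrib]
  refine dvd_add (Finset.dvd_sum fun u hu => ?_) (Finset.dvd_sum fun u hu => ?_)
  · -- for `u ≰ t'`, `ν u` already contains the full power of `p` dividing `ν t`
    simp only [Finset.mem_sdiff, Set.Finite.mem_toFinset, Set.mem_Iic] at hu
    have hnd : ¬ ν u ∣ ν t' := fun hd => hu.2 (hν.le_of_le_of_dvd hu.1 ht hd)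
    have hpu := Nat.ordProj_mul_prime_dvd_of_not_dvd hp (hν.pos t').ne'
      (hmul ▸ hν.dvd_of_le hu.1) hnd
    rw [← hmul]
    simpa only [Nat.cast_pow] using (Nat.cast_dvd_cast (α := R) hpu).mul_right _
  · -- for `u ≤ t'`, raise `b u ^ p ≡ φ p (b u) mod p` to the power `e = ν t' / ν u`
    obtain ⟨e, he⟩ := hν.dvd_of_le ((hν.finite_Iic t').mem_toFinset.1 hu)
    have he0 : e ≠ 0 := by rintro rfl; exact (hν.pos t').ne' (by simpa using he)
    have hte : ν t = ν u * (p * e) := by rw [← hmul, he]; ring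
    rw [hte, he, Nat.mul_div_cancel_left _ (hν.pos u), Nat.mul_div_cancel_left _ (hν.pos u),
      pow_mul, ← mul_sub, Nat.factorization_mul (hν.pos u).ne' (mul_ne_zero hp.ne_zero he0),
      Nat.factorization_mul hp.ne_zero he0, Finsupp.add_apply, Finsupp.add_apply,
      hp.factorization_self, pow_add]
    refine mul_dvd_mul ?_ (pow_sub_pow_dvd_of_dvd_sub le_rfl ?_ e)
    · simpa only [Nat.cast_pow] using Nat.cast_dvd_cast (α := R) (Nat.ordProj_dvd (ν u) p)
    · simpa using dvd_sub_comm.1 (hφ p hp (b u))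

theorem exists_ghost_eq_of_dworkCongr (hν : IsTPNorm ν) {φ : ℕ → R →+* R}
    (hφ : IsFrobeniusLift φ) {c : T → R} (hc : DworkCongr ν φ c) : ∃ b : T → R, ghost ν b = c := by
  classical
  have hwf := hν.wellFounded_lt
  -- `b t` is chosen, once `b` is known strictly below `t`, so that `ghost ν b t = c t`
  let lift : ∀ t, (∀ u, u < t → R) → R := fun t b =>
    let b' : T → R := fun u => if h : u < t then b u h else 0
    if h : (ν t : R) ∣ c t - ghost ν b' t then h.choose else 0
  refine ⟨hwf.fix lift, funext fun t => ?_⟩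
  induction t using hwf.induction with | _ t ih =>
  set b := hwf.fix lift
  set b' : T → R := fun u => if u < t then b u else 0
  have hb' : ∀ u < t, b u = b' u := fun u hu => (if_pos hu).symm
  have hdvd : (ν t : R) ∣ c t - ghost ν b' t := by
    refine natCast_dvd_of_forall_prime_pow_dvd (hν.pos t).ne' fun p hp hpt => ?_
    obtain ⟨t', ht', hνt'⟩ := hν.exists_le_norm_eq (Nat.div_dvd_of_dvd hpt)
    have hmul : ν t' * p = ν t := by rw [hνt', Nat.div_mul_cancel hpt]
    have hlt : t' < t := ht'.lt_of_ne fun h => by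
      rw [h] at hmul; nlinarith [hp.two_le, hν.pos t]
    have hct' : c t' = ghost ν b' t' :=
      (ih t' hlt).symm.trans (ghost_congr fun u hu => hb' u (hu.trans_lt hlt))
    have hcong := dvd_sub (hc p hp t' t ht' hmul) (ghost_dworkCongr hν hφ b' p hp t' t ht' hmul)
    rwa [hct', sub_sub_sub_cancel_right] at hcong
  have hbt : b t = hdvd.choose := (hwf.fix_eq lift t).trans (dif_pos hdvd)
  have hsub := ghost_sub_ghost_of_eq_of_lt hν hb'
  rw [hbt, show b' t = 0 from if_neg (lt_irrefl t), sub_zero, ← hdvd.choose_spec] at hsub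
  exact sub_left_inj.1 hsub

end Ghost

section Norm

variable {S T : Type*} [PartialOrder S] [PartialOrder T] {νS : S → ℕ} {νT : T → ℕ} {f : S → T}
  {R : Type*} [CommRing R]

theorem map_nmGhost {R' F : Type*} [CommRing R'] [FunLike F R R'] [RingHomClass F R R'] (g : F)
    {t : T} (hfin : (hatPreim f t).Finite) (x : S → R) :
    g (nmGhost νS νT f x t) = nmGhost νS νT f (fun s => g (x s)) t := by
  simp only [nmGhost, ← map_pow]
  exact MonoidHom.map_finprod_mem _ (g : R →* R') hfin

theorem pow_sub_pow_dvd_of_mem_hatPreim (hS : IsTPNorm νS) (hT : IsTPNorm νT)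
    (hf : IsTPMap νS νT f) {φ : ℕ → R →+* R} (hφ : IsFrobeniusLift φ) {G : S → R}
    (hG : DworkCongr νS φ G) {p : ℕ} (hp : p.Prime) {t' t : T} (hmul : νT t' * p = νT t)
    {s' s : S} (hs' : s' ∈ hatPreim f t') (hs : s ∈ hatPreim f t) (hle : s' ≤ s) :
    (p : R) ^ (νT t).factorization p ∣ G s ^ (νT t / νS s) - φ p (G s') ^ (νT t' / νS s') := by
  obtain ⟨e, he⟩ := norm_dvd_of_mem_hatPreim hS hT hf hs'
  have he0 : e ≠ 0 := by rintro rfl; exact (hT.pos t').ne' (by simpa using he)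
  rcases eq_or_norm_mul_of_mem_hatPreim hS hT hf hp hmul hs' hs hle with ⟨hss, hps⟩ | hmulS
  · subst hss
    have hte : νT t = νS s' * (p * e) := by rw [← hmul, he]; ring
    rw [hte, he, Nat.mul_div_cancel_left _ (hS.pos s'), Nat.mul_div_cancel_left _ (hS.pos s'),
      pow_mul, Nat.factorization_mul (hS.pos s').ne' (mul_ne_zero hp.ne_zero he0),
      Nat.factorization_mul hp.ne_zero he0, Finsupp.add_apply, Finsupp.add_apply,
      hp.factorization_self, Nat.factorization_eq_zero_of_not_dvd hps, zero_add]
    exact pow_sub_pow_dvd_of_dvd_sub le_rfl (by simpa using dvd_sub_comm.1 (hφ p hp (G s'))) e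
  · have hte : νT t = νS s * e := by rw [← hmul, he, ← hmulS]; ring
    have hps : p ∣ νS s := hmulS ▸ dvd_mul_left p _
    rw [hte, he, Nat.mul_div_cancel_left _ (hS.pos s), Nat.mul_div_cancel_left _ (hS.pos s'),
      Nat.factorization_mul (hS.pos s).ne' he0, Finsupp.add_apply]
    exact pow_sub_pow_dvd_of_dvd_sub (hp.factorization_pos_of_dvd (hS.pos s).ne' hps)
      (hG p hp s' s hle hmulS) e

theorem nmGhost_dworkCongr (hS : IsTPNorm νS) (hT : IsTPNorm νT) (hf : IsNMap νS νT f)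
    {φ : ℕ → R →+* R} (hφ : IsFrobeniusLift φ) {G : S → R} (hG : DworkCongr νS φ G) :
    DworkCongr νT φ (nmGhost νS νT f G) := by
  intro p hp t' t ht hmul
  obtain ⟨ρ, hρ, hρle⟩ := exists_bijOn_hatPreim hS hT hf ht
  rw [map_nmGhost _ (hf.2.2 t'), nmGhost, nmGhost, ← finprod_mem_eq_of_bijOn ρ hρ fun s _ => rfl]
  exact dvd_finprod_mem_sub_finprod_mem (hf.2.2 t) fun s hs =>
    pow_sub_pow_dvd_of_mem_hatPreim hS hT hf.1 hφ hG hp hmul (hρ.mapsTo hs) hs (hρle s hs)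

end Norm

section Universal

open MvPolynomial

variable {S T : Type*} [PartialOrder S] [PartialOrder T] {νS : S → ℕ} {νT : T → ℕ} {f : S → T}

theorem isFrobeniusLift_expand (σ : Type*) :
    IsFrobeniusLift fun p => (expand p : MvPolynomial σ ℤ →ₐ[ℤ] MvPolynomial σ ℤ).toRingHom := by
  intro p hp x
  have : Fact p.Prime := ⟨hp⟩
  rw [← map_natCast (C : ℤ →+* MvPolynomial σ ℤ), C_dvd_iff_zmod]
  simp [map_expand, expand_zmod]

theorem exists_ghost_eq_nmGhost_ghost_X (hS : IsTPNorm νS) (hT : IsTPNorm νT)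
    (hf : IsNMap νS νT f) :
    ∃ b : T → MvPolynomial S ℤ, ghost νT b = nmGhost νS νT f (ghost νS X) :=
  exists_ghost_eq_of_dworkCongr hT (isFrobeniusLift_expand S)
    (nmGhost_dworkCongr hS hT hf (isFrobeniusLift_expand S)
      (ghost_dworkCongr hS (isFrobeniusLift_expand S) X))

theorem ghost_aeval_eq (hS : IsTPNorm νS) (hT : IsTPNorm νT)
    (hfin : ∀ t, (hatPreim f t).Finite) {b : T → MvPolynomial S ℤ}
    (hb : ghost νT b = nmGhost νS νT f (ghost νS X)) {k : Type*} [CommRing k] (a : S → k) :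
    ghost νT (fun t => aeval a (b t)) = nmGhost νS νT f (ghost νS a) := by
  funext t
  rw [← map_ghost hT, hb, map_nmGhost _ (hfin t)]
  simp only [map_ghost hS, aeval_X]

end Universal

end TP

/-- Existence and uniqueness of the multiplicative norm `f_⊗` induced by an N-map
`f : S → T`: on ghost coordinates it is `(x_s) ↦ (Π_{s ∈ f^{-hat}(t)} x_s^{|t|/|s|})`,
it lifts to Witt coordinates, and the lift is unique among maps natural in `k`. -/
theorem stmt12 {S T : Type} [PartialOrder S] [PartialOrder T]
    (νS : S → ℕ) (νT : T → ℕ) (hS : TP.IsTPNorm νS) (hT : TP.IsTPNorm νT)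
    (f : S → T) (hf : TP.IsNMap νS νT f) :
    (∀ (k : Type) [CommRing k], ∀ a : S → k,
        ∃ b : T → k, TP.ghost νT b = nmGhost νS νT f (TP.ghost νS a)) ∧
    ∃! F : ∀ (k : Type) [CommRing k], (S → k) → (T → k),
      (∀ (k : Type) [CommRing k], ∀ a : S → k,
        TP.ghost νT (F k a) = nmGhost νS νT f (TP.ghost νS a)) ∧
      (∀ (k₁ k₂ : Type) [CommRing k₁] [CommRing k₂], ∀ (g : k₁ →+* k₂) (a : S → k₁),
        F k₂ (fun s => g (a s)) = fun t => g (F k₁ a t)) := by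
  obtain ⟨b, hb⟩ := TP.exists_ghost_eq_nmGhost_ghost_X hS hT hf
  have hghost := fun (k : Type) [CommRing k] (a : S → k) => TP.ghost_aeval_eq hS hT hf.2.2 hb a
  refine ⟨fun k _ a => ⟨_, hghost k a⟩, ⟨fun k _ a t => MvPolynomial.aeval a (b t), ⟨hghost,
    fun k₁ k₂ _ _ g a => funext fun t =>
      (MvPolynomial.comp_aeval_apply a g.toIntAlgHom (b t)).symm⟩, ?_⟩⟩
  rintro F ⟨hFghost, hFnat⟩
  have hFX : F (MvPolynomial S ℤ) MvPolynomial.X = b :=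
    TP.ghost_injective hT ((hFghost _ MvPolynomial.X).trans hb.symm)
  funext k _ a t
  have hnat := congrFun (hFnat (MvPolynomial S ℤ) k
    (MvPolynomial.aeval a : MvPolynomial S ℤ →ₐ[ℤ] k).toRingHom MvPolynomial.X) t
  simpa only [AlgHom.toRingHom_eq_coe, RingHom.coe_coe, MvPolynomial.aeval_X, hFX] using hnat
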